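/- Suppose W A Z = D^{-1} with W lower unitriangular (rows w_j), Z upper unitriangular (columns z_i), D = diag(d_1,...,d_n). If the row w_j is written as w_j = e_j^T − Σ_{i<j} β_i^{(j)} w_i, then β_i^{(j)} = d_i · (e_j^T A z_i) for all i < j, i.e., β_i^{(j)} equals d_i times the product of the j-th row of A with z_i. -/

import Mathlib

/-! Rewrite the expansion of `w_j` as `e_jᵀ = w_j + ∑_{i<j} β_i^{(j)} w_i` and multiply it on the
right by `A Z`: the left side becomes the `j`-th row of `A Z`, and since `W (A Z) = D⁻¹` is
diagonal, the `i`-th entry of the right side is just `β_i^{(j)} / d_i`. -/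

open Matrix BigOperators Finset

def LowerUnitri {n : ℕ} (W : Matrix (Fin n) (Fin n) ℝ) : Prop :=
  (∀ i j : Fin n, i < j → W i j = 0) ∧ (∀ i : Fin n, W i i = 1)

def UpperUnitri {n : ℕ} (Z : Matrix (Fin n) (Fin n) ℝ) : Prop :=
  (∀ i j : Fin n, j < i → Z i j = 0) ∧ (∀ i : Fin n, Z i i = 1)

namespace Matrix

variable {m n R : Type*} [Fintype m] [DecidableEq m]

theorem inv_diagonal_of_ne_zero {K : Type*} [Field K] {d : m → K} (hd : ∀ i, d i ≠ 0) :
    (diagonal d)⁻¹ = diagonal d⁻¹ :=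
  inv_eq_right_inv <| by
    rw [diagonal_mul_diagonal, ← diagonal_one]
    exact congrArg diagonal (funext fun i => mul_inv_cancel₀ (hd i))

theorem row_eq_of_single_eq_add_sum [Semiring R] {W : Matrix m m R} (M : Matrix m n R)
    {j : m} {s : Finset m} {c : m → R} (hrow : Pi.single j 1 = W j + ∑ i ∈ s, c i • W i) :
    M j = (W * M) j + ∑ i ∈ s, c i • (W * M) i := by
  calc M j = Pi.single j 1 ᵥ* M := (single_one_vecMul j M).symm
    _ = W j ᵥ* M + ∑ i ∈ s, c i • W i ᵥ* M := by
      rw [hrow, add_vecMul, sum_vecMul]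
      simp only [smul_vecMul]

theorem apply_eq_of_mul_eq_diagonal [Semiring R] {W : Matrix m m R} {M : Matrix m m R}
    {e : m → R} (hWM : W * M = diagonal e)
    {j : m} {s : Finset m} {c : m → R} (hrow : Pi.single j 1 = W j + ∑ i ∈ s, c i • W i)
    {i : m} (hi : i ∈ s) (hij : i ≠ j) :
    M j i = c i * e i := by
  rw [congrFun (row_eq_of_single_eq_add_sum M hrow) i, hWM, Pi.add_apply, Finset.sum_apply,
    Finset.sum_eq_single_of_mem i hi fun k _ hki => by simp [diagonal_apply_ne _ hki]]
  simp [diagonal_apply_ne _ hij.symm]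

end Matrix

theorem stmt4_general {n : ℕ} (A W Z : Matrix (Fin n) (Fin n) ℝ) (d : Fin n → ℝ)
    (β : Fin n → Fin n → ℝ)
    (hd : ∀ i, d i ≠ 0)
    (h : W * A * Z = (Matrix.diagonal d)⁻¹)
    (hexp : ∀ j k : Fin n,
      W j k = (if k = j then (1 : ℝ) else 0)
        - ∑ i ∈ Finset.univ.filter (· < j), β i j * W i k) :
    ∀ i j : Fin n, i < j → β i j = d i * ∑ k, A j k * Z k i := by
  intro i j hij
  have hWM : W * (A * Z) = diagonal d⁻¹ := by
    rw [← Matrix.mul_assoc, h, inv_diagonal_of_ne_zero hd]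
  have hrow : Pi.single j 1 = W j + ∑ i ∈ univ.filter (· < j), β i j • W i := by
    funext k
    simp only [hexp j k, Pi.single_apply, Pi.add_apply, Finset.sum_apply, Pi.smul_apply,
      smul_eq_mul]
    ring
  have hAZ := apply_eq_of_mul_eq_diagonal hWM hrow (by simpa using hij) hij.ne
  rw [← mul_apply, hAZ, Pi.inv_apply, mul_left_comm, mul_inv_cancel₀ (hd i), mul_one]

theorem stmt4 {n : ℕ} (A W Z : Matrix (Fin n) (Fin n) ℝ) (d : Fin n → ℝ)
    (β : Fin n → Fin n → ℝ)
    (hW : LowerUnitri W) (hZ : UpperUnitri Z) (hd : ∀ i, d i ≠ 0)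
    (h : W * A * Z = (Matrix.diagonal d)⁻¹)
    (hexp : ∀ j k : Fin n,
      W j k = (if k = j then (1 : ℝ) else 0)
        - ∑ i ∈ Finset.univ.filter (· < j), β i j * W i k) :
    ∀ i j : Fin n, i < j → β i j = d i * ∑ k, A j k * Z k i :=
  stmt4_general A W Z d β hd h hexp
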